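/- Let β ∈ [0, π/2) and let ρ : ℝ × ℝ → ℝ be a continuously differentiable function with ρ(θ,ψ) > 0 for all (θ,ψ). If the surface defined by ρ is equiangular with characteristic angle β on the strip {(θ,ψ) : θ ∈ ℝ, ψ ∈ (−π/2, π/2)}, i.e. the angle between N(θ,ψ) and X(θ,ψ) equals β for all θ ∈ ℝ and ψ ∈ (−π/2, π/2), then ρ satisfies the partial differential equation ρ_θ(θ,ψ)² + ρ_ψ(θ,ψ)² cos²ψ = ρ(θ,ψ)² cos²ψ · tan²β for all θ ∈ ℝ and ψ ∈ (−π/2, π/2). -/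

import Mathlib

open Real

/-- The surface map `X(θ,ψ) = ρ(θ,ψ)·(cos ψ cos θ, cos ψ sin θ, sin ψ)`. -/
noncomputable def Xsurf (ρ : ℝ → ℝ → ℝ) (θ ψ : ℝ) : EuclideanSpace ℝ (Fin 3) :=
  WithLp.toLp 2 ![ρ θ ψ * Real.cos ψ * Real.cos θ, ρ θ ψ * Real.cos ψ * Real.sin θ, ρ θ ψ * Real.sin ψ]

/-- The normal vector `N = X_θ × X_ψ`. -/
noncomputable def Nsurf (ρ : ℝ → ℝ → ℝ) (θ ψ : ℝ) : EuclideanSpace ℝ (Fin 3) :=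
  WithLp.toLp 2 (crossProduct (deriv (fun t => Xsurf ρ t ψ) θ).ofLp (deriv (fun s => Xsurf ρ θ s) ψ).ofLp)

/-!
In the orthonormal frame `u = X / ρ`, `e_θ = (-sin θ, cos θ, 0)`, `e_ψ = ∂u/∂ψ` one has `X = ρ u`,
`X_θ = ρ_θ u + ρ cos ψ e_θ`, `X_ψ = ρ_ψ u + ρ e_ψ`, hence
`N = ρ (ρ cos ψ u - ρ_θ e_θ - ρ_ψ cos ψ e_ψ)`. So `⟨N, X⟩ = ρ³ cos ψ`, `‖X‖² = ρ²` and
`‖N‖² = ρ² (ρ_θ² + ρ_ψ² cos² ψ + ρ² cos² ψ)`. Squaring `cos β ‖N‖ ‖X‖ = ⟨N, X⟩` and cancelling `ρ⁴`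
gives `cos² β (P + Q) = Q` with `P = ρ_θ² + ρ_ψ² cos² ψ` and `Q = ρ² cos² ψ > 0`; this forces
`cos β ≠ 0`, and then `P = Q tan² β`.
-/

lemma hasDerivAt_toLp_fin3 {f₀ f₁ f₂ : ℝ → ℝ} {a₀ a₁ a₂ x : ℝ}
    (h₀ : HasDerivAt f₀ a₀ x) (h₁ : HasDerivAt f₁ a₁ x) (h₂ : HasDerivAt f₂ a₂ x) :
    HasDerivAt (fun t => (WithLp.toLp 2 ![f₀ t, f₁ t, f₂ t] : EuclideanSpace ℝ (Fin 3)))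
      (WithLp.toLp 2 ![a₀, a₁, a₂]) x := by
  have h : HasDerivAt (fun t => ![f₀ t, f₁ t, f₂ t]) ![a₀, a₁, a₂] x := by
    rw [hasDerivAt_pi]
    intro i
    fin_cases i
    exacts [h₀, h₁, h₂]
  exact (EuclideanSpace.equiv (Fin 3) ℝ).symm.hasFDerivAt.comp_hasDerivAt x h

lemma cos_sq_angle_mul_norm_sq_mul_norm_sq {V : Type*} [NormedAddCommGroup V]
    [InnerProductSpace ℝ V] (x y : V) :
    cos (InnerProductGeometry.angle x y) ^ 2 * (‖x‖ ^ 2 * ‖y‖ ^ 2) = inner ℝ x y ^ 2 := by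
  rw [← InnerProductGeometry.cos_angle_mul_norm_mul_norm]
  ring

lemma eq_mul_tan_sq_of_cos_sq_mul_add_eq {β P Q : ℝ} (hQ : Q ≠ 0)
    (h : cos β ^ 2 * (P + Q) = Q) : P = Q * tan β ^ 2 := by
  have hcos : cos β ≠ 0 := by
    rintro hβ
    rw [hβ] at h
    exact hQ (by simpa using h.symm)
  rw [tan_eq_sin_div_cos, div_pow, sin_sq]
  field_simp
  linear_combination h

section Partial

variable {𝕜 E F G : Type*} [NontriviallyNormedField 𝕜] [NormedAddCommGroup E] [NormedSpace 𝕜 E]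
  [NormedAddCommGroup F] [NormedSpace 𝕜 F] [NormedAddCommGroup G] [NormedSpace 𝕜 G]
  {f : E → F → G} {x : E} {y : F}

lemma DifferentiableAt.left_of_uncurry (h : DifferentiableAt 𝕜 (Function.uncurry f) (x, y)) :
    DifferentiableAt 𝕜 (fun t => f t y) x :=
  h.comp (f := fun t => (t, y)) x (differentiableAt_id.prodMk (differentiableAt_const y))

lemma DifferentiableAt.right_of_uncurry (h : DifferentiableAt 𝕜 (Function.uncurry f) (x, y)) :
    DifferentiableAt 𝕜 (f x) y :=
  h.comp (f := fun s => (x, s)) y ((differentiableAt_const x).prodMk differentiableAt_id)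

end Partial

section Surface

variable {ρ : ℝ → ℝ → ℝ} {θ ψ A B : ℝ}

lemma hasDerivAt_Xsurf_theta (hA : HasDerivAt (fun t => ρ t ψ) A θ) :
    HasDerivAt (fun t => Xsurf ρ t ψ)
      (WithLp.toLp 2 ![A * cos ψ * cos θ - ρ θ ψ * cos ψ * sin θ,
        A * cos ψ * sin θ + ρ θ ψ * cos ψ * cos θ, A * sin ψ]) θ :=
  hasDerivAt_toLp_fin3 (((hA.mul_const (cos ψ)).mul (hasDerivAt_cos θ)).congr_deriv (by ring))
    ((hA.mul_const _).mul (hasDerivAt_sin θ)) (hA.mul_const _)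

lemma hasDerivAt_Xsurf_psi (hB : HasDerivAt (ρ θ) B ψ) :
    HasDerivAt (fun s => Xsurf ρ θ s)
      (WithLp.toLp 2 ![B * cos ψ * cos θ - ρ θ ψ * sin ψ * cos θ,
        B * cos ψ * sin θ - ρ θ ψ * sin ψ * sin θ, B * sin ψ + ρ θ ψ * cos ψ]) ψ := by
  refine hasDerivAt_toLp_fin3 ?_ ?_ (hB.mul (hasDerivAt_sin ψ))
  · exact ((hB.mul (hasDerivAt_cos ψ)).mul_const (cos θ)).congr_deriv (by ring)
  · exact ((hB.mul (hasDerivAt_cos ψ)).mul_const (sin θ)).congr_deriv (by ring)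

lemma Nsurf_eq (hA : HasDerivAt (fun t => ρ t ψ) A θ) (hB : HasDerivAt (ρ θ) B ψ) :
    Nsurf ρ θ ψ = ρ θ ψ • WithLp.toLp 2
      ![cos θ * cos ψ * (ρ θ ψ * cos ψ + B * sin ψ) + A * sin θ,
        sin θ * cos ψ * (ρ θ ψ * cos ψ + B * sin ψ) - A * cos θ,
        cos ψ * (ρ θ ψ * sin ψ - B * cos ψ)] := by
  rw [Nsurf, (hasDerivAt_Xsurf_theta hA).deriv, (hasDerivAt_Xsurf_psi hB).deriv]
  ext i
  fin_cases i <;>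
    simp only [Fin.zero_eta, Fin.mk_one, Fin.reduceFinMk, Fin.isValue, cross_apply,
      Matrix.cons_val_zero, Matrix.cons_val_one, Matrix.cons_val, PiLp.smul_apply, smul_eq_mul]
  · linear_combination A * ρ θ ψ * sin θ * sin_sq_add_cos_sq ψ
  · linear_combination -A * ρ θ ψ * cos θ * sin_sq_add_cos_sq ψ
  · linear_combination -ρ θ ψ * cos ψ * (B * cos ψ - ρ θ ψ * sin ψ) * sin_sq_add_cos_sq θ

lemma norm_Xsurf_sq : ‖Xsurf ρ θ ψ‖ ^ 2 = ρ θ ψ ^ 2 := by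
  simp only [Xsurf, EuclideanSpace.norm_sq_eq, norm_eq_abs, sq_abs, Fin.sum_univ_three, mul_pow,
    Matrix.cons_val_zero, Matrix.cons_val_one, Matrix.cons_val]
  linear_combination ρ θ ψ ^ 2 * cos ψ ^ 2 * sin_sq_add_cos_sq θ + ρ θ ψ ^ 2 * sin_sq_add_cos_sq ψ

lemma inner_Nsurf_Xsurf (hA : HasDerivAt (fun t => ρ t ψ) A θ) (hB : HasDerivAt (ρ θ) B ψ) :
    inner ℝ (Nsurf ρ θ ψ) (Xsurf ρ θ ψ) = ρ θ ψ ^ 3 * cos ψ := by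
  rw [Nsurf_eq hA hB]
  simp only [Xsurf, PiLp.inner_apply, PiLp.smul_apply, smul_eq_mul, RCLike.inner_apply,
    conj_trivial, Fin.sum_univ_three, Matrix.cons_val_zero, Matrix.cons_val_one, Matrix.cons_val]
  linear_combination ρ θ ψ ^ 2 * cos ψ ^ 2 * (ρ θ ψ * cos ψ + B * sin ψ) * sin_sq_add_cos_sq θ
    + ρ θ ψ ^ 3 * cos ψ * sin_sq_add_cos_sq ψ

lemma norm_Nsurf_sq (hA : HasDerivAt (fun t => ρ t ψ) A θ) (hB : HasDerivAt (ρ θ) B ψ) :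
    ‖Nsurf ρ θ ψ‖ ^ 2
      = ρ θ ψ ^ 2 * ((A ^ 2 + B ^ 2 * cos ψ ^ 2) + ρ θ ψ ^ 2 * cos ψ ^ 2) := by
  rw [Nsurf_eq hA hB]
  simp only [EuclideanSpace.norm_sq_eq, PiLp.smul_apply, smul_eq_mul, norm_mul, norm_eq_abs,
    mul_pow, sq_abs, Fin.sum_univ_three, Matrix.cons_val_zero, Matrix.cons_val_one, Matrix.cons_val]
  linear_combination ρ θ ψ ^ 2 * (cos ψ ^ 2 * (ρ θ ψ * cos ψ + B * sin ψ) ^ 2 + A ^ 2)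
      * sin_sq_add_cos_sq θ
    + ρ θ ψ ^ 2 * cos ψ ^ 2 * (ρ θ ψ ^ 2 + B ^ 2) * sin_sq_add_cos_sq ψ

end Surface

theorem equiangular_implies_pde (β : ℝ)
    (ρ : ℝ → ℝ → ℝ) (hρC : ContDiff ℝ 1 (Function.uncurry ρ))
    (hρpos : ∀ θ ψ, 0 < ρ θ ψ)
    (hangle : ∀ θ : ℝ, ∀ ψ ∈ Set.Ioo (-(π / 2)) (π / 2),
      InnerProductGeometry.angle (Nsurf ρ θ ψ) (Xsurf ρ θ ψ) = β) :
    ∀ θ : ℝ, ∀ ψ ∈ Set.Ioo (-(π / 2)) (π / 2),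
      (deriv (fun t => ρ t ψ) θ) ^ 2 + (deriv (fun s => ρ θ s) ψ) ^ 2 * Real.cos ψ ^ 2
        = (ρ θ ψ) ^ 2 * Real.cos ψ ^ 2 * Real.tan β ^ 2 := by
  intro θ ψ hψ
  have hdiff := hρC.differentiable one_ne_zero (θ, ψ)
  have hA := hdiff.left_of_uncurry.hasDerivAt
  have hB := hdiff.right_of_uncurry.hasDerivAt
  have hρ := hρpos θ ψ
  have hcos := cos_pos_of_mem_Ioo hψ
  have key := cos_sq_angle_mul_norm_sq_mul_norm_sq (Nsurf ρ θ ψ) (Xsurf ρ θ ψ)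
  rw [hangle θ ψ hψ, norm_Nsurf_sq hA hB, norm_Xsurf_sq, inner_Nsurf_Xsurf hA hB] at key
  refine eq_mul_tan_sq_of_cos_sq_mul_add_eq (by positivity) ?_
  apply mul_left_cancel₀ (pow_ne_zero 4 hρ.ne')
  linear_combination key
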